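/- Let D be a normalized deterministic co-Büchi automaton recognizing L (L(D) = L). Then for all pairs of finite words (u,v): (u,v) ≈_L ⊥ if and only if (u,v) ≈_D ⊥. -/

import Mathlib

open Classical

/-- Rank of a transition in a co-Büchi automaton: `one` or `two`. -/
inductive Rk | one | two
deriving DecidableEq

/-- A co-Büchi automaton over alphabet `A` with state type `Q`:
initial states and a transition relation where each transition carries a rank. -/
structure CoBuchi (A : Type) (Q : Type) where
  init : Set Q
  delta : Set (Q × A × Rk × Q)

namespace CoBuchi

variable {A Q : Type}

/-- Every state has an outgoing transition on every letter. -/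
def Total (M : CoBuchi A Q) : Prop :=
  ∀ q a, ∃ r q', (q, a, r, q') ∈ M.delta

/-- The prefix `α[0..n-1]` of an infinite word. -/
def prefW (α : ℕ → A) (n : ℕ) : List A := (List.range n).map α

/-- The infinite word `a·w`. -/
def consW (a : A) (w : ℕ → A) : ℕ → A := fun n => match n with
  | 0 => a
  | Nat.succ k => w k

/-- `L(M,q)`: infinite words having a run from `q` with only finitely many rank-1
transitions. -/
def LangFrom (M : CoBuchi A Q) (q : Q) : Set (ℕ → A) :=
  { w | ∃ (ρ : ℕ → Q) (r : ℕ → Rk), ρ 0 = q ∧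
        (∀ n, (ρ n, w n, r n, ρ (n + 1)) ∈ M.delta) ∧
        ∃ N, ∀ n, N ≤ n → r n = Rk.two }

/-- `L(M)`: the language of the automaton. -/
def Lang (M : CoBuchi A Q) : Set (ℕ → A) :=
  { w | ∃ q ∈ M.init, w ∈ M.LangFrom q }

/-- `q →₂^w q'`: a finite run from `q` to `q'` on `w` using only rank-2 transitions. -/
def SafeReach (M : CoBuchi A Q) : Q → List A → Q → Prop
  | q, [], q' => q = q'
  | q, a :: w, q' => ∃ p, (q, a, Rk.two, p) ∈ M.delta ∧ SafeReach M p w q'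

/-- A finite run from `q` to `q'` on `w` using transitions of any rank. -/
def Reach (M : CoBuchi A Q) : Q → List A → Q → Prop
  | q, [], q' => q = q'
  | q, a :: w, q' => ∃ r p, (q, a, r, p) ∈ M.delta ∧ Reach M p w q'

/-- Safe language of a state. -/
def Lsf (M : CoBuchi A Q) (q : Q) : Set (List A) := { w | ∃ q', M.SafeReach q w q' }

/-- Semantically-deterministic: every transition respects residuals. -/
def SemDet (M : CoBuchi A Q) : Prop :=
  ∀ p a rk q, (p, a, rk, q) ∈ M.delta →
    M.LangFrom q = { w | consW a w ∈ M.LangFrom p }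

/-- Unsafe-saturated: all residual-respecting rank-1 transitions are present. -/
def UnsafeSat (M : CoBuchi A Q) : Prop :=
  ∀ p a q, M.LangFrom q = { w | consW a w ∈ M.LangFrom p } →
    (p, a, Rk.one, q) ∈ M.delta

/-- Safe-deterministic: at most one rank-2 transition per state and letter. -/
def SafeDet (M : CoBuchi A Q) : Prop :=
  ∀ p a q q', (p, a, Rk.two, q) ∈ M.delta → (p, a, Rk.two, q') ∈ M.delta → q = q'

/-- Normalized: every rank-2 transition can be completed to a rank-2 loop. -/
def Normalized (M : CoBuchi A Q) : Prop :=
  ∀ q a q', (q, a, Rk.two, q') ∈ M.delta → ∃ x, M.SafeReach q' x q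

/-- Deterministic: one initial state, exactly one transition per state and letter. -/
def Deterministic (M : CoBuchi A Q) : Prop :=
  (∃! q, q ∈ M.init) ∧ ∀ p a, ∃! t : Rk × Q, (p, a, t.1, t.2) ∈ M.delta

/-- History-deterministic: a strategy `σ : Σ* → Q` resolving the nondeterminism,
whose run on every `α ∈ L(M)` can be ranked with finitely many rank-1 transitions. -/
def HistoryDet (M : CoBuchi A Q) : Prop :=
  ∃ σ : List A → Q, σ [] ∈ M.init ∧
    (∀ w a, ∃ rk, (σ w, a, rk, σ (w ++ [a])) ∈ M.delta) ∧
    ∀ α ∈ M.Lang, ∃ r : ℕ → Rk,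
      (∀ n, (σ (prefW α n), α n, r n, σ (prefW α (n + 1))) ∈ M.delta) ∧
      ∃ N, ∀ n, N ≤ n → r n = Rk.two

/-- `q` and `q'` are in the same safe SCC (mutually reachable via rank-2 runs). -/
def SameSafeSCC (M : CoBuchi A Q) (q q' : Q) : Prop :=
  (∃ x, M.SafeReach q x q') ∧ (∃ y, M.SafeReach q' y q)

end CoBuchi

section LangDefs

variable {A : Type} [Nonempty A]

/-- The infinite word `u·w`. -/
def appW (u : List A) (w : ℕ → A) : ℕ → A :=
  fun n => if h : n < u.length then u.get ⟨n, h⟩ else w (n - u.length)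

/-- The infinite word `v^ω` (arbitrary if `v = ε`). -/
noncomputable def iterW (v : List A) : ℕ → A :=
  fun n =>
    if h : v = [] then Classical.arbitrary A
    else v.get ⟨n % v.length, Nat.mod_lt _ (by cases v <;> simp_all)⟩

/-- The ultimately periodic word `u v^ω`. -/
noncomputable def upW (u v : List A) : ℕ → A := appW u (iterW v)

/-- The right congruence `u ∼_L v`. -/
def SimL (L : Set (ℕ → A)) (u v : List A) : Prop :=
  ∀ w : ℕ → A, appW u w ∈ L ↔ appW v w ∈ L

/-- `(u,v) ≈_L ⊥`: `v ≠ ε` and `u(vx)^ω ∉ L` for all `x` with `uvx ∼_L u`. -/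
def ApproxBot (L : Set (ℕ → A)) (u v : List A) : Prop :=
  v ≠ [] ∧ ∀ x : List A, SimL L (u ++ v ++ x) u → upW u (v ++ x) ∉ L

/-- The safe language of a pair: `sfl(u,v) = {x | (u,vx) not ≈_L ⊥}`. -/
def Sfl (L : Set (ℕ → A)) (u v : List A) : Set (List A) :=
  { x | ¬ ApproxBot L u (v ++ x) }

/-- `(u,v) ≡_L (u',v')`. -/
def EquivL (L : Set (ℕ → A)) (u v u' v' : List A) : Prop :=
  SimL L (u ++ v) (u' ++ v') ∧ Sfl L u v = Sfl L u' v'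

/-- `(u,v)` is pointed. -/
def IsPointed (L : Set (ℕ → A)) (u v : List A) : Prop :=
  ¬ ApproxBot L u v ∧
    ∀ u₁ u₂ : List A, SimL L (u₁ ++ u₂) u → ¬ ApproxBot L u₁ (u₂ ++ v) →
      Sfl L u v = Sfl L u₁ (u₂ ++ v)

/-- `(u,v) ≈_L (u',v')` (for pairs with nonempty second components). -/
def ApproxL (L : Set (ℕ → A)) (u v u' v' : List A) : Prop :=
  SimL L u u' ∧ SimL L (u ++ v) (u' ++ v') ∧
    ∀ x : List A, SimL L (u ++ v ++ x) u →
      (upW u (v ++ x) ∈ L ↔ upW u' (v' ++ x) ∈ L)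

/-- `L` is recognized by some (total) deterministic co-Büchi automaton. -/
def DCWRecognizable (L : Set (ℕ → A)) : Prop :=
  ∃ (Q : Type) (_ : Fintype Q) (M : CoBuchi A Q), M.Deterministic ∧ M.Lang = L

/-- IsPointed pairs. -/
def PointedPair (L : Set (ℕ → A)) : Type :=
  { p : List A × List A // IsPointed L p.1 p.2 }

/-- `≡_L` as a setoid on all pairs. -/
def equivLSetoid (L : Set (ℕ → A)) : Setoid (List A × List A) where
  r p q := EquivL L p.1 p.2 q.1 q.2
  iseqv := {
    refl := fun p => ⟨fun w => Iff.rfl, rfl⟩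
    symm := fun h => ⟨fun w => (h.1 w).symm, h.2.symm⟩
    trans := fun h g => ⟨fun w => (h.1 w).trans (g.1 w), h.2.trans g.2⟩ }

/-- `≡_L` as a setoid on pointed pairs. -/
def canonSetoid (L : Set (ℕ → A)) : Setoid (PointedPair L) where
  r p q := EquivL L p.1.1 p.1.2 q.1.1 q.1.2
  iseqv := {
    refl := fun p => ⟨fun w => Iff.rfl, rfl⟩
    symm := fun h => ⟨fun w => (h.1 w).symm, h.2.symm⟩
    trans := fun h g => ⟨fun w => (h.1 w).trans (g.1 w), h.2.trans g.2⟩ }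

/-- States of the canonical automaton: `≡_L`-classes of pointed pairs. -/
def CanonState (L : Set (ℕ → A)) : Type := Quotient (canonSetoid L)

/-- The class `⟦u,v⟧` of a pointed pair. -/
def cls (L : Set (ℕ → A)) (u v : List A) (h : IsPointed L u v) : CanonState L :=
  Quotient.mk (canonSetoid L) ⟨(u, v), h⟩

/-- The canonical automaton `A_{≡_L}`. -/
def canonAut (L : Set (ℕ → A)) : CoBuchi A (CanonState L) where
  init := { s | ∃ (u v : List A) (h : IsPointed L u v),
              s = cls L u v h ∧ SimL L (u ++ v) [] }
  delta := { t |
    (∃ (u v : List A) (h : IsPointed L u v) (h' : IsPointed L u (v ++ [t.2.1])),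
        ¬ ApproxBot L u (v ++ [t.2.1]) ∧
        t.1 = cls L u v h ∧ t.2.2.1 = Rk.two ∧
        t.2.2.2 = cls L u (v ++ [t.2.1]) h') ∨
    (∃ (u v u' v' : List A) (h : IsPointed L u v) (h' : IsPointed L u' v'),
        SimL L (u ++ v ++ [t.2.1]) (u' ++ v') ∧
        t.1 = cls L u v h ∧ t.2.2.1 = Rk.one ∧ t.2.2.2 = cls L u' v' h') }

/-- `θ(u,v)`: states of `A_{≡_L}` reachable by reading `u` from an initial state
(any ranks) and then `v` via rank-2 transitions only. -/
def theta (L : Set (ℕ → A)) (u v : List A) : Set (CanonState L) :=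
  { q | ∃ p₀ ∈ (canonAut L).init, ∃ p,
          (canonAut L).Reach p₀ u p ∧ (canonAut L).SafeReach p v q }

/-- `(u,v)` is supported: `θ(u,v) ≠ ∅`. -/
def Supported (L : Set (ℕ → A)) (u v : List A) : Prop := (theta L u v).Nonempty

/-- `(u,v)` is double-supported: two distinct states of `θ(u,v)` in the same safe SCC. -/
def DoubleSupported (L : Set (ℕ → A)) (u v : List A) : Prop :=
  ∃ q ∈ theta L u v, ∃ q' ∈ theta L u v, q ≠ q' ∧ (canonAut L).SameSafeSCC q q'

/-- `(u,v)` is single-supported. -/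
def SingleSupported (L : Set (ℕ → A)) (u v : List A) : Prop :=
  Supported L u v ∧ ¬ DoubleSupported L u v

/-- `w` concatenated with itself `m` times. -/
def repCat (w : List A) : ℕ → List A
  | 0 => []
  | Nat.succ m => w ++ repCat w m

end LangDefs
/-- `(u,v) ≈_D ⊥` for a deterministic automaton `D`: for every `u' ∼_L u`,
the run of `D` on `u'v` takes a rank-1 transition within the suffix `v`,
i.e. the state `p` reached on `u'` admits no rank-2-only run on `v`. -/
def ApproxD {A Q : Type} [Nonempty A] (D : CoBuchi A Q) (L : Set (ℕ → A))
    (u v : List A) : Prop :=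
  ∀ u' : List A, SimL L u' u → ∀ q₀ ∈ D.init, ∀ p, D.Reach q₀ u' p →
    ¬ ∃ q, D.SafeReach p v q

/-!
If some `u' ∼_L u` leads `D` to a state `p` from which `v` can be read safely, normalization
closes this safe path to a safe cycle `p →₂^{vz} p`. Determinism then gives `u'vz ∼_L u'`, and the
cycle gives `u'(vz)^ω ∈ L`, so `z` witnesses that `(u,v)` is not `≈_L ⊥`.
Conversely, if `u(vx)^ω ∈ L` with `uvx ∼_L u`, the accepting run is safe after some position `N`.
The prefix `u' = u(vx)^N` has length at least `N` and `u' ∼_L u`, and after `u'` the run reads `v`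
safely, so `(u,v)` is not `≈_D ⊥`.
-/

section Words

variable {A : Type}

theorem appW_nil (β : ℕ → A) : appW [] β = β := by
  funext n
  simp [appW]

theorem appW_cons (a : A) (w : List A) (β : ℕ → A) :
    appW (a :: w) β = CoBuchi.consW a (appW w β) := by
  funext n
  cases n <;> simp [appW, CoBuchi.consW]

theorem appW_append (u v : List A) (β : ℕ → A) :
    appW (u ++ v) β = appW u (appW v β) := by
  induction u with
  | nil => rw [List.nil_append, appW_nil]
  | cons a u ih => rw [List.cons_append, appW_cons, appW_cons, ih]

theorem appW_add_length (w : List A) (β : ℕ → A) (n : ℕ) :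
    appW w β (n + w.length) = β n := by
  simp [appW]

theorem le_length_repCat {y : List A} (hy : y ≠ []) (k : ℕ) : k ≤ (repCat y k).length := by
  induction k with
  | zero => exact le_rfl
  | succ k ih =>
    have := List.length_pos_iff.mpr hy
    simp only [repCat, List.length_append]
    omega

theorem SimL.symm {L : Set (ℕ → A)} {u u' : List A} (h : SimL L u u') : SimL L u' u :=
  fun w => (h w).symm

theorem SimL.trans {L : Set (ℕ → A)} {u u' u'' : List A} (h : SimL L u u')
    (h' : SimL L u' u'') : SimL L u u'' :=
  fun w => (h w).trans (h' w)

theorem SimL.append_right {L : Set (ℕ → A)} {u u' : List A} (h : SimL L u u') (s : List A) :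
    SimL L (u ++ s) (u' ++ s) := fun w => by
  rw [appW_append, appW_append]
  exact h (appW s w)

theorem SimL.append_repCat {L : Set (ℕ → A)} {u y : List A} (h : SimL L (u ++ y) u) (k : ℕ) :
    SimL L (u ++ repCat y k) u := by
  induction k with
  | zero => rw [repCat, List.append_nil]; exact fun _ => Iff.rfl
  | succ k ih =>
    rw [repCat, ← List.append_assoc]
    exact (h.append_right _).trans ih

variable [Nonempty A]

theorem appW_iterW {y : List A} (hy : y ≠ []) : appW y (iterW y) = iterW y := by
  funext n
  by_cases h : n < y.length
  · simp [appW, iterW, hy, h, Nat.mod_eq_of_lt h]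
  · simp [appW, iterW, hy, h, Nat.mod_eq_sub_mod (not_lt.mp h)]

theorem appW_repCat_iterW {y : List A} (hy : y ≠ []) (k : ℕ) :
    appW (repCat y k) (iterW y) = iterW y := by
  induction k with
  | zero => exact appW_nil _
  | succ k ih => rw [repCat, appW_append, ih, appW_iterW hy]

end Words

namespace CoBuchi

variable {A Q : Type} {M : CoBuchi A Q}

theorem reach_append {w₁ w₂ : List A} {p q : Q} :
    M.Reach p (w₁ ++ w₂) q ↔ ∃ s, M.Reach p w₁ s ∧ M.Reach s w₂ q := by
  induction w₁ generalizing p with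
  | nil => simp [Reach]
  | cons a w ih => simp only [List.cons_append, Reach, ih]; aesop

theorem safeReach_append {w₁ w₂ : List A} {p q : Q} :
    M.SafeReach p (w₁ ++ w₂) q ↔ ∃ s, M.SafeReach p w₁ s ∧ M.SafeReach s w₂ q := by
  induction w₁ generalizing p with
  | nil => simp [SafeReach]
  | cons a w ih => simp only [List.cons_append, SafeReach, ih]; aesop

theorem SafeReach.reach {w : List A} {p q : Q} (h : M.SafeReach p w q) : M.Reach p w q := by
  induction w generalizing p with
  | nil => exact h
  | cons a w ih =>
    obtain ⟨p', ht, h⟩ := h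
    exact ⟨Rk.two, p', ht, ih h⟩

theorem Total.exists_reach (hM : M.Total) (p : Q) (w : List A) : ∃ q, M.Reach p w q := by
  induction w generalizing p with
  | nil => exact ⟨p, rfl⟩
  | cons a w ih =>
    obtain ⟨r, p', ht⟩ := hM p a
    obtain ⟨q, hq⟩ := ih p'
    exact ⟨q, r, p', ht, hq⟩

theorem Deterministic.total (hM : M.Deterministic) : M.Total := fun p a =>
  let ⟨t, ht, _⟩ := hM.2 p a
  ⟨t.1, t.2, ht⟩

theorem Deterministic.reach_unique (hM : M.Deterministic) {w : List A} {p q q' : Q}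
    (h : M.Reach p w q) (h' : M.Reach p w q') : q = q' := by
  induction w generalizing p with
  | nil => exact h.symm.trans h'
  | cons a w ih =>
    obtain ⟨r, p₁, ht, h⟩ := h
    obtain ⟨r', p₁', ht', h'⟩ := h'
    obtain ⟨_, _, huniq⟩ := hM.2 p a
    cases (huniq (r, p₁) ht).trans (huniq (r', p₁') ht').symm
    exact ih h h'

theorem Deterministic.lang_eq_langFrom (hM : M.Deterministic) {q₀ : Q} (hq₀ : q₀ ∈ M.init) :
    M.Lang = M.LangFrom q₀ := by
  ext α
  refine ⟨fun ⟨q, hq, hα⟩ => ?_, fun hα => ⟨q₀, hq₀, hα⟩⟩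
  rwa [hM.1.unique hq hq₀] at hα

theorem Normalized.exists_safeReach_back (hM : M.Normalized) {w : List A} {p q : Q}
    (h : M.SafeReach p w q) : ∃ z, M.SafeReach q z p := by
  induction w generalizing p with
  | nil => exact ⟨[], h.symm⟩
  | cons a w ih =>
    obtain ⟨p', ht, h⟩ := h
    obtain ⟨z, hz⟩ := ih h
    obtain ⟨x, hx⟩ := hM p a p' ht
    exact ⟨z ++ x, safeReach_append.mpr ⟨p', hz, hx⟩⟩

theorem consW_mem_langFrom_iff {a : A} {γ : ℕ → A} {p : Q} :
    consW a γ ∈ M.LangFrom p ↔ ∃ r q, (p, a, r, q) ∈ M.delta ∧ γ ∈ M.LangFrom q := by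
  constructor
  · rintro ⟨ρ, r, rfl, hstep, N, hN⟩
    exact ⟨r 0, ρ 1, hstep 0, fun n => ρ (n + 1), fun n => r (n + 1), rfl,
      fun n => hstep (n + 1), N, fun n hn => hN _ (by omega)⟩
  · rintro ⟨r₀, q, ht, ρ, r, rfl, hstep, N, hN⟩
    refine ⟨consW p ρ, consW r₀ r, rfl, ?_, N + 1, ?_⟩
    · rintro (_ | n)
      exacts [ht, hstep n]
    · rintro (_ | n) hn
      exacts [absurd hn (by omega), hN n (by omega)]

theorem appW_mem_langFrom_iff {w : List A} {γ : ℕ → A} {p : Q} :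
    appW w γ ∈ M.LangFrom p ↔ ∃ q, M.Reach p w q ∧ γ ∈ M.LangFrom q := by
  induction w generalizing p with
  | nil => simp [appW_nil, Reach]
  | cons a w ih =>
    simp only [appW_cons, consW_mem_langFrom_iff, ih, Reach]
    aesop

theorem mem_langFrom_of_safe_invariant (P : Q → (ℕ → A) → Prop)
    (hP : ∀ q γ, P q γ → ∃ q', (q, γ 0, Rk.two, q') ∈ M.delta ∧ P q' (fun n => γ (n + 1)))
    {q : Q} {γ : ℕ → A} (h : P q γ) : γ ∈ M.LangFrom q := by
  let next (x : {x : Q × (ℕ → A) // P x.1 x.2}) : {x : Q × (ℕ → A) // P x.1 x.2} :=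
    ⟨((hP _ _ x.2).choose, fun n => x.1.2 (n + 1)), (hP _ _ x.2).choose_spec.2⟩
  let s (n : ℕ) := next^[n] ⟨(q, γ), h⟩
  have hs : ∀ n, s (n + 1) = next (s n) := fun n => Function.iterate_succ_apply' _ _ _
  have hword : ∀ n, (s n).1.2 0 = γ n := by
    suffices ∀ n m, (s n).1.2 m = γ (m + n) from fun n => (this n 0).trans (by rw [zero_add])
    intro n
    induction n with
    | zero => intro m; rfl
    | succ n ih => intro m; rw [hs]; exact (ih (m + 1)).trans (congrArg γ (by omega))
  refine ⟨fun n => (s n).1.1, fun _ => Rk.two, rfl, fun n => ?_, 0, fun _ _ => rfl⟩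
  show ((s n).1.1, γ n, Rk.two, (s (n + 1)).1.1) ∈ M.delta
  rw [← hword, hs]
  exact (hP _ _ (s n).2).choose_spec.1

theorem SafeReach.iterW_mem_langFrom [Nonempty A] {y : List A} {p : Q} (hy : y ≠ [])
    (h : M.SafeReach p y p) : iterW y ∈ M.LangFrom p := by
  refine mem_langFrom_of_safe_invariant
    (fun q γ => ∃ s, M.SafeReach q s p ∧ γ = appW s (iterW y)) ?_ ⟨[], rfl, (appW_nil _).symm⟩
  rintro q _ ⟨s, hs, rfl⟩
  obtain ⟨a, s', hs', he⟩ : ∃ a s', M.SafeReach q (a :: s') p ∧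
      appW s (iterW y) = appW (a :: s') (iterW y) := by
    obtain ⟨a, y', rfl⟩ := List.exists_cons_of_ne_nil hy
    cases s with
    | nil => exact ⟨a, y', (hs : q = p) ▸ h, by rw [appW_nil, appW_iterW hy]⟩
    | cons b s' => exact ⟨b, s', hs, rfl⟩
  obtain ⟨q', ht, hs'⟩ := hs'
  rw [he, appW_cons]
  exact ⟨q', ht, s', hs', rfl⟩

theorem Deterministic.appW_mem_langFrom_iff (hM : M.Deterministic) {w : List A} {γ : ℕ → A}
    {p q : Q} (h : M.Reach p w q) : appW w γ ∈ M.LangFrom p ↔ γ ∈ M.LangFrom q := by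
  rw [CoBuchi.appW_mem_langFrom_iff]
  exact ⟨fun ⟨q', h', hγ⟩ => hM.reach_unique h h' ▸ hγ, fun hγ => ⟨q, h, hγ⟩⟩

theorem Deterministic.simL_lang_of_reach (hM : M.Deterministic) {q₀ p : Q} (hq₀ : q₀ ∈ M.init)
    {u u' : List A} (hu : M.Reach q₀ u p) (hu' : M.Reach q₀ u' p) : SimL M.Lang u u' := by
  intro γ
  rw [hM.lang_eq_langFrom hq₀, hM.appW_mem_langFrom_iff hu, hM.appW_mem_langFrom_iff hu']

section Runs

variable {ρ : ℕ → Q} {r : ℕ → Rk} {γ : ℕ → A}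

theorem reach_of_run (w : List A) (hrun : ∀ n, (ρ n, appW w γ n, r n, ρ (n + 1)) ∈ M.delta) :
    M.Reach (ρ 0) w (ρ w.length) := by
  induction w generalizing ρ r with
  | nil => rfl
  | cons a w ih =>
    simp only [appW_cons] at hrun
    exact ⟨r 0, ρ 1, hrun 0, ih (ρ := fun n => ρ (n + 1)) (fun n => hrun (n + 1))⟩

theorem safeReach_of_run (w : List A) (hrun : ∀ n, (ρ n, appW w γ n, r n, ρ (n + 1)) ∈ M.delta)
    (hsafe : ∀ n, r n = Rk.two) : M.SafeReach (ρ 0) w (ρ w.length) := by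
  induction w generalizing ρ r with
  | nil => rfl
  | cons a w ih =>
    simp only [appW_cons] at hrun
    exact ⟨ρ 1, hsafe 0 ▸ hrun 0, ih (ρ := fun n => ρ (n + 1)) (r := fun n => r (n + 1))
      (fun n => hrun (n + 1)) (fun n => hsafe (n + 1))⟩

end Runs

theorem Deterministic.approxD_of_approxBot [Nonempty A] (hM : M.Deterministic)
    (hN : M.Normalized) {u v : List A} (h : ApproxBot M.Lang u v) : ApproxD M M.Lang u v := by
  rintro u' hu' q₀ hq₀ p hp ⟨q, hv⟩
  obtain ⟨z, hz⟩ := hN.exists_safeReach_back hv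
  have hloop : M.SafeReach p (v ++ z) p := safeReach_append.mpr ⟨q, hv, hz⟩
  have hpump : SimL M.Lang (u' ++ (v ++ z)) u' :=
    hM.simL_lang_of_reach hq₀ (reach_append.mpr ⟨p, hp, hloop.reach⟩) hp
  have hacc : appW u' (iterW (v ++ z)) ∈ M.Lang := by
    rw [hM.lang_eq_langFrom hq₀, hM.appW_mem_langFrom_iff hp]
    exact hloop.iterW_mem_langFrom (by simp [h.1])
  refine h.2 z ?_ ((hu' _).mp hacc)
  rw [List.append_assoc]
  exact (hu'.symm.append_right _).trans (hpump.trans hu')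

theorem approxBot_of_approxD [Nonempty A] (hM : M.Total) {q₀ : Q} (hq₀ : q₀ ∈ M.init)
    {u v : List A} (h : ApproxD M M.Lang u v) : ApproxBot M.Lang u v := by
  have hv : v ≠ [] := by
    rintro rfl
    obtain ⟨p, hp⟩ := hM.exists_reach q₀ u
    exact h u (fun _ => Iff.rfl) q₀ hq₀ p hp ⟨p, rfl⟩
  refine ⟨hv, fun x hx hacc => ?_⟩
  obtain ⟨q₀', hq₀', ρ, r, rfl, hrun, N, hN⟩ := hacc
  have hy : v ++ x ≠ [] := by simp [*]
  set u' := u ++ repCat (v ++ x) N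
  have hword : upW u (v ++ x) = appW u' (appW v (appW x (iterW (v ++ x)))) := by
    rw [appW_append, ← appW_append v x, appW_iterW hy, appW_repCat_iterW hy]
    rfl
  rw [hword] at hrun
  have hu' : SimL M.Lang u' u := SimL.append_repCat (by rwa [← List.append_assoc]) N
  refine h u' hu' (ρ 0) hq₀' _ (reach_of_run u' hrun) ?_
  have hlen : N ≤ u'.length := by
    simpa [u'] using (le_length_repCat hy N).trans (Nat.le_add_left _ u.length)
  have hsafe := safeReach_of_run (ρ := fun n => ρ (n + u'.length))
    (r := fun n => r (n + u'.length)) v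
    (fun n => by simpa [appW_add_length, add_right_comm] using hrun (n + u'.length))
    (fun n => hN _ (by omega))
  exact ⟨_, by simpa using hsafe⟩

end CoBuchi

theorem stmt3_general {A Q : Type} [Nonempty A]
    (L : Set (ℕ → A)) (D : CoBuchi A Q)
    (hDet : D.Deterministic) (hNorm : D.Normalized) (hL : D.Lang = L)
    (u v : List A) :
    ApproxBot L u v ↔ ApproxD D L u v := by
  subst hL
  obtain ⟨q₀, hq₀, -⟩ := hDet.1
  exact ⟨hDet.approxD_of_approxBot hNorm, CoBuchi.approxBot_of_approxD hDet.total hq₀⟩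

/-- for a normalized deterministic co-Büchi automaton `D`
recognizing `L`: `(u,v) ≈_L ⊥` iff `(u,v) ≈_D ⊥`. -/
theorem stmt3 {A Q : Type} [Nonempty A] [Fintype A] [Fintype Q]
    (L : Set (ℕ → A)) (D : CoBuchi A Q)
    (hDet : D.Deterministic) (hNorm : D.Normalized) (hL : D.Lang = L)
    (u v : List A) :
    ApproxBot L u v ↔ ApproxD D L u v :=
  stmt3_general L D hDet hNorm hL u v
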